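/- Braid relation (type A2): if the Cartan integers are c_α(β) = −1 and c_β(α) = −1, then the Demazure operators satisfy the length-three braid relation: δ_α(δ_β(δ_α(u))) = δ_β(δ_α(δ_β(u))) for every u ∈ ℤ[M]. -/

import Mathlib

open AddMonoidAlgebra

noncomputable section

/-- The reflection `λ ↦ λ - c(λ) • α` associated to a root `α` and coroot `c`,
as an additive homomorphism of the weight lattice `M`. -/
def demazureReflection {M : Type*} [AddCommGroup M] (α : M) (c : M →+ ℤ) : M →+ M where
  toFun := fun lam => lam - c lam • α
  map_zero' := by simp
  map_add' := fun x y => by simp only [map_add, add_smul]; abel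

/-- The ring endomorphism of the group algebra `ℤ[M]` induced by the reflection
`s(λ) = λ - c(λ)·α`; it sends `e^λ` to `e^{s(λ)}`. -/
def demazureReflectionAlg {M : Type*} [AddCommGroup M] (α : M) (c : M →+ ℤ) :
    AddMonoidAlgebra ℤ M →+* AddMonoidAlgebra ℤ M :=
  mapDomainRingHom ℤ (demazureReflection α c)

/-!
Write `x = e^{-α}`, `y = e^{-β}`. Applying the reflections to the defining identities of `δα`
and `δβ` and clearing denominators expresses `(1 - x)² (1 - y)² (1 - x y) · δα δβ δα u` as a
combination of the six Weyl translates of `u` which is symmetric under `α ↔ β` once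
`sα sβ sα = sβ sα sβ`. The factor `(1 - x)² (1 - y)² (1 - x y)` is a non-zero-divisor of `ℤ[M]`,
as `e^γ` has infinite order for `γ = -α, -β, -α-β`, so it can be cancelled.
-/

open scoped nonZeroDivisors

section DemazureRelations

variable {R : Type*} [CommRing R] (σ τ : R →+* R) {x y : R} {δα δβ : R → R}

/-- Clearing the denominators `Δ = (1 - x) (1 - y) (1 - x y)` in
`δα δβ δα = ∑_w w (· / Δ)`, the sum over the six elements of the Weyl group generated by
`σ` and `τ`. -/
theorem demazure_aba_expansion (hσσ : ∀ u, σ (σ u) = u) (hσx : x * σ x = 1)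
    (hσy : σ y = x * y) (hτx : τ x = x * y)
    (hδα : ∀ u, (1 - x) * δα u = u - x * σ u) (hδβ : ∀ u, (1 - y) * δβ u = u - y * τ u)
    (u : R) :
    (1 - x) ^ 2 * (1 - y) ^ 2 * (1 - x * y) * δα (δβ (δα u)) =
      (1 - x) * (1 - y) * (u - x * σ u - y * τ u + x ^ 2 * y * σ (τ u)
        + x * y ^ 2 * τ (σ u) - x ^ 2 * y ^ 2 * σ (τ (σ u))) := by
  have hσxy : σ (x * y) = y := by
    rw [map_mul, hσy, ← mul_assoc, mul_comm (σ x), hσx, one_mul]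
  have hA₁ := hδα u
  have hσA₁ := congrArg σ (hδα u)
  have hτA₁ := congrArg τ (hδα u)
  have hστA₁ := congrArg (σ.comp τ) (hδα u)
  have hA₂ := hδβ (δα u)
  have hσA₂ := congrArg σ (hδβ (δα u))
  have hA₃ := hδα (δβ (δα u))
  simp only [RingHom.comp_apply, map_sub, map_mul, map_one, hσσ, hτx, hσy, hσxy]
    at hσA₁ hτA₁ hστA₁ hσA₂
  linear_combination (1 - x) * (1 - y) ^ 2 * (1 - x * y) * hA₃
    + (1 - x) * (1 - y) * (1 - x * y) * hA₂
    - y * (1 - x) * (1 - y) * hτA₁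
    + (1 - y) * (1 - x * y) * hA₁
    - x * (1 - x) * (1 - y) ^ 2 * hσA₂
    + x * (1 - y) ^ 2 * (x * hσA₁ + (σ (δα u) - u) * hσx)
    + x ^ 2 * y * (1 - x) * (1 - y) * hστA₁

theorem demazure_braid_of_relations (hσσ : ∀ u, σ (σ u) = u) (hττ : ∀ u, τ (τ u) = u)
    (hbraid : ∀ u, σ (τ (σ u)) = τ (σ (τ u)))
    (hσx : x * σ x = 1) (hτy : y * τ y = 1) (hσy : σ y = x * y) (hτx : τ x = x * y)
    (hδα : ∀ u, (1 - x) * δα u = u - x * σ u) (hδβ : ∀ u, (1 - y) * δβ u = u - y * τ u)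
    (hΔ : (1 - x) ^ 2 * (1 - y) ^ 2 * (1 - x * y) ∈ R⁰) (u : R) :
    δα (δβ (δα u)) = δβ (δα (δβ u)) := by
  have hA := demazure_aba_expansion σ τ hσσ hσx hσy hτx hδα hδβ u
  have hB := demazure_aba_expansion τ σ hττ hτy (hτx.trans (mul_comm x y))
    (hσy.trans (mul_comm x y)) hδβ hδα u
  rw [← mul_cancel_left_mem_nonZeroDivisors hΔ]
  linear_combination hA - hB - (1 - x) * (1 - y) * x ^ 2 * y ^ 2 * hbraid u

end DemazureRelations

theorem AddMonoidAlgebra.one_sub_single_mem_nonZeroDivisors {k G : Type*} [CommRing k]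
    [AddCommGroup G] {γ : G} (hγ : ¬IsOfFinAddOrder γ) :
    (1 - single γ 1 : k[G]) ∈ k[G]⁰ := by
  refine mem_nonZeroDivisors_iff_right.mpr fun f hf => ?_
  have hfix : f * single γ 1 = f := by
    rw [mul_sub, mul_one, sub_eq_zero] at hf
    exact hf.symm
  have hshift : ∀ m ∈ f.coeff.support, m + γ ∈ f.coeff.support := fun m hm => by
    rwa [Finsupp.mem_support_iff, ← hfix, coeff_mul_single_apply, add_neg_cancel_right,
      mul_one, ← Finsupp.mem_support_iff]
  by_contra hf0
  obtain ⟨m, hm⟩ := Finsupp.support_nonempty_iff.mpr (coeff_eq_zero.not.mpr hf0)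
  have horbit : ∀ n : ℕ, m + n • γ ∈ f.coeff.support := fun n => by
    induction n with
    | zero => simpa using hm
    | succ n ih => simpa [succ_nsmul, ← add_assoc] using hshift _ ih
  exact Set.infinite_of_injective_forall_mem
    ((add_right_injective m).comp (injective_nsmul_iff_not_isOfFinAddOrder.mpr hγ))
    horbit f.coeff.support.finite_toSet

theorem AddMonoidHom.not_isOfFinAddOrder_of_map_ne_zero {M : Type*} [AddMonoid M]
    (c : M →+ ℤ) {γ : M} (hγ : c γ ≠ 0) : ¬IsOfFinAddOrder γ :=
  fun h => hγ ((isOfFinAddOrder_iff_eq_zero _).mp (c.isOfFinAddOrder h))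

section WeightLattice

variable {M : Type*} [AddCommGroup M] {α β : M} {c cα cβ : M →+ ℤ}

theorem demazureReflection_apply (m : M) : demazureReflection α c m = m - c m • α := rfl

theorem demazureReflectionAlg_single (m : M) (n : ℤ) :
    demazureReflectionAlg α c (single m n) = single (demazureReflection α c m) n :=
  mapDomain_single

theorem demazureReflection_involutive (hc : c α = 2) :
    Function.Involutive (demazureReflection α c) := fun m => by
  simp only [demazureReflection_apply, map_sub, map_zsmul, hc]
  module

theorem demazureReflection_braid (hcα : cα α = 2) (hcβ : cβ β = 2) (h1 : cα β = -1)
    (h2 : cβ α = -1) (m : M) :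
    demazureReflection α cα (demazureReflection β cβ (demazureReflection α cα m)) =
      demazureReflection β cβ (demazureReflection α cα (demazureReflection β cβ m)) := by
  simp only [demazureReflection_apply, map_sub, map_zsmul, hcα, hcβ, h1, h2]
  module

theorem demazureReflectionAlg_involutive (hc : c α = 2) :
    Function.Involutive (demazureReflectionAlg α c) := fun u => by
  have hid : (demazureReflection α c).comp (demazureReflection α c) = .id M :=
    AddMonoidHom.ext (demazureReflection_involutive hc)
  rw [demazureReflectionAlg, ← RingHom.comp_apply, ← mapDomainRingHom_comp, hid,
    mapDomainRingHom_id, RingHom.id_apply]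

theorem demazureReflectionAlg_braid (hcα : cα α = 2) (hcβ : cβ β = 2) (h1 : cα β = -1)
    (h2 : cβ α = -1) (u : ℤ[M]) :
    demazureReflectionAlg α cα (demazureReflectionAlg β cβ (demazureReflectionAlg α cα u)) =
      demazureReflectionAlg β cβ (demazureReflectionAlg α cα (demazureReflectionAlg β cβ u)) := by
  simp only [demazureReflectionAlg, ← RingHom.comp_apply, ← mapDomainRingHom_comp]
  congr 2
  exact AddMonoidHom.ext (demazureReflection_braid hcα hcβ h1 h2)

theorem single_neg_mul_demazureReflectionAlg_single_neg (hc : c α = 2) :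
    single (-α) 1 * demazureReflectionAlg α c (single (-α) 1) = 1 := by
  rw [demazureReflectionAlg_single, demazureReflection_apply, single_mul_single, map_neg, hc,
    show -α + (-α - -2 • α) = 0 by module, mul_one, one_def]

theorem demazureReflectionAlg_single_neg_of_eq_neg_one (h : c β = -1) :
    demazureReflectionAlg α c (single (-β) 1) = single (-α) 1 * single (-β) 1 := by
  rw [demazureReflectionAlg_single, demazureReflection_apply, single_mul_single, map_neg, h,
    mul_one]
  congr 1
  module

end WeightLattice

theorem demazure_braid_A2_general {M : Type*} [AddCommGroup M]
    (α β : M)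
    (cα cβ : M →+ ℤ) (hcα : cα α = 2) (hcβ : cβ β = 2)
    (δα δβ : AddMonoidAlgebra ℤ M →ₗ[ℤ] AddMonoidAlgebra ℤ M)
    (hδα : ∀ u : AddMonoidAlgebra ℤ M,
      (1 - single (-α) 1) * δα u = u - single (-α) 1 * demazureReflectionAlg α cα u)
    (hδβ : ∀ u : AddMonoidAlgebra ℤ M,
      (1 - single (-β) 1) * δβ u = u - single (-β) 1 * demazureReflectionAlg β cβ u)
    (h1 : cα β = -1) (h2 : cβ α = -1) :
    ∀ u : AddMonoidAlgebra ℤ M, δα (δβ (δα u)) = δβ (δα (δβ u)) := by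
  have hΔ : (1 - single (-α) 1) ^ 2 * (1 - single (-β) 1) ^ 2 *
      (1 - single (-α) 1 * single (-β) 1) ∈ ℤ[M]⁰ := by
    rw [single_mul_single, mul_one]
    -- `cα` is `-2`, `1`, `-1` on `-α`, `-β`, `-α + -β`, so none of these has finite order.
    refine mul_mem (mul_mem (pow_mem ?_ 2) (pow_mem ?_ 2)) ?_ <;>
      refine one_sub_single_mem_nonZeroDivisors (cα.not_isOfFinAddOrder_of_map_ne_zero ?_) <;>
      simp [hcα, h1]
  exact demazure_braid_of_relations _ _ (demazureReflectionAlg_involutive hcα)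
    (demazureReflectionAlg_involutive hcβ) (demazureReflectionAlg_braid hcα hcβ h1 h2)
    (single_neg_mul_demazureReflectionAlg_single_neg hcα)
    (single_neg_mul_demazureReflectionAlg_single_neg hcβ)
    (demazureReflectionAlg_single_neg_of_eq_neg_one h1)
    ((demazureReflectionAlg_single_neg_of_eq_neg_one h2).trans (mul_comm _ _)) hδα hδβ hΔ

/-- Braid relation in type A2: if cα(β) = -1 and cβ(α) = -1 then
δα δβ δα = δβ δα δβ. -/
theorem demazure_braid_A2 {M : Type*} [AddCommGroup M]
    [Module.Free ℤ M] [Module.Finite ℤ M]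
    (α β : M) (hαβ : LinearIndependent ℤ ![α, β])
    (cα cβ : M →+ ℤ) (hcα : cα α = 2) (hcβ : cβ β = 2)
    (δα δβ : AddMonoidAlgebra ℤ M →ₗ[ℤ] AddMonoidAlgebra ℤ M)
    (hδα : ∀ u : AddMonoidAlgebra ℤ M,
      (1 - single (-α) 1) * δα u = u - single (-α) 1 * demazureReflectionAlg α cα u)
    (hδβ : ∀ u : AddMonoidAlgebra ℤ M,
      (1 - single (-β) 1) * δβ u = u - single (-β) 1 * demazureReflectionAlg β cβ u)
    (h1 : cα β = -1) (h2 : cβ α = -1) :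
    ∀ u : AddMonoidAlgebra ℤ M, δα (δβ (δα u)) = δβ (δα (δβ u)) :=
  demazure_braid_A2_general α β cα cβ hcα hcβ δα δβ hδα hδβ h1 h2
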